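/- Let (X,d) be a metric space and k a non-negative integer, and suppose that the k-th Vietoris homology ℋ_k(X) is not isomorphic to the zero group. For ε ∈ (0,∞), let MH_k(ε) := H_k(CN(X)(ε)/D(ε)) denote the k-th magnitude homology group in grading ε, and regard ε ↦ MH_k(ε) as a functor from the poset ((0,∞), ≤) to abelian groups in which every map MH_k(ε) → MH_k(ε') with ε < ε' is the zero homomorphism; regard ε ↦ H_k(CN(X)(ε)) (blurred magnitude homology) as a functor with maps induced by the inclusions N(X)(ε) ⊆ N(X)(ε'). Then the limit as ε → 0 of MH_k(ε) is not isomorphic to the limit as ε → 0 of H_k(CN(X)(ε)): indeed the former is the zero group while the latter is isomorphic to ℋ_k(X). -/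

import Mathlib

/-!
In the magnitude system every projection `lim MH_k ⟶ MH_k(δ)` factors through the zero map
`MH_k(δ/2) ⟶ MH_k(δ)`, so the limit is zero.

For blurred magnitude homology, `N(ε) ⊆ V(ε)` since every distance in a tuple is bounded by
its length, while a tuple of dimension `n` with pairwise distances `≤ ε` has length `≤ n ε`.
So `V(δ/(k+1)) ∩ N(δ)` and `V(δ/(k+1))` have the same simplices through dimension `k + 1`,
hence the same `H_k`, and the systems `H_k(N(·))` and `H_k(V(·))` are interleaved by
`δ ↦ δ/(k+1)`. Interleaved systems have isomorphic limits as `δ → 0`.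
-/

open CategoryTheory CategoryTheory.Limits

noncomputable section

namespace Mag

variable (X : Type) [MetricSpace X]

/-- The length of a tuple of points `(x 0, …, x n)` of a metric space:
`∑ i, dist (x i) (x (i+1))`. -/
def len {n : ℕ} (f : Fin (n + 1) → X) : ℝ :=
  ∑ i : Fin n, dist (f i.castSucc) (f i.succ)

lemma len_nonneg {n : ℕ} (f : Fin (n + 1) → X) : 0 ≤ len X f :=
  Finset.sum_nonneg fun _ _ => dist_nonneg

/-- Extension of a tuple to a function on `ℕ`, constant past the end. -/
def ext' {n : ℕ} (f : Fin (n + 1) → X) : ℕ → X :=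
  fun m => f ⟨min m n, Nat.lt_succ_of_le (min_le_right m n)⟩

lemma len_eq_sum_range {n : ℕ} (f : Fin (n + 1) → X) :
    len X f = ∑ m ∈ Finset.range n, dist (ext' X f m) (ext' X f (m + 1)) := by
  rw [len, ← Fin.sum_univ_eq_sum_range]
  apply Finset.sum_congr rfl
  intro i _
  congr 1
  · congr 1
    apply Fin.ext
    simp [ext', min_eq_left i.isLt.le]
  · congr 1
    apply Fin.ext
    simp [ext', min_eq_left (Nat.succ_le_of_lt i.isLt)]

private lemma chunk_sum (u : ℕ → ℝ) (G : ℕ → ℕ) (hG : Monotone G) (M : ℕ) :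
    ∑ j ∈ Finset.range M, ∑ i ∈ Finset.Ico (G j) (G (j + 1)), u i
      = ∑ i ∈ Finset.Ico (G 0) (G M), u i := by
  induction M with
  | zero => simp
  | succ M ih =>
    rw [Finset.sum_range_succ, ih]
    exact Finset.sum_Ico_consecutive u (hG (Nat.zero_le M)) (hG (Nat.le_succ M))

/-- Precomposition with a monotone map does not increase the length of a tuple. -/
lemma len_comp_le {m n : ℕ} (f : Fin (n + 1) → X) (g : Fin (m + 1) →o Fin (n + 1)) :
    len X (f ∘ g) ≤ len X f := by
  set F : ℕ → X := ext' X f with hF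
  set G : ℕ → ℕ :=
    fun j => ((g ⟨min j m, Nat.lt_succ_of_le (min_le_right j m)⟩ : Fin (n + 1)) : ℕ) with hG
  have hGle : ∀ j, G j ≤ n := fun j => Nat.lt_succ_iff.mp (g _).isLt
  have hGmono : Monotone G := by
    intro a b hab
    exact g.monotone (Fin.mk_le_mk.mpr (min_le_min hab le_rfl))
  have key : ∀ j, ext' X (f ∘ g) j = F (G j) := by
    intro j
    show (f ∘ g) _ = f _
    simp only [Function.comp_apply, hF, ext']
    congr 1
    apply Fin.ext
    simp [min_eq_left (hGle j)]
    rfl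
  calc len X (f ∘ g)
      = ∑ j ∈ Finset.range m, dist (F (G j)) (F (G (j + 1))) := by
        rw [len_eq_sum_range]
        exact Finset.sum_congr rfl fun j _ => by rw [key, key]
    _ ≤ ∑ j ∈ Finset.range m, ∑ i ∈ Finset.Ico (G j) (G (j + 1)), dist (F i) (F (i + 1)) := by
        apply Finset.sum_le_sum
        intro j _
        exact dist_le_Ico_sum_dist F (hGmono (Nat.le_succ j))
    _ = ∑ i ∈ Finset.Ico (G 0) (G m), dist (F i) (F (i + 1)) := chunk_sum _ G hGmono m
    _ ≤ ∑ i ∈ Finset.range n, dist (F i) (F (i + 1)) := by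
        apply Finset.sum_le_sum_of_subset_of_nonneg
        · intro i hi
          rw [Finset.mem_range]
          exact lt_of_lt_of_le (Finset.mem_Ico.mp hi).2 (hGle m)
        · intro i _ _
          exact dist_nonneg
    _ = len X f := (len_eq_sum_range X f).symm

/-- The enriched nerve of a metric space at scale `ε`: the simplicial set whose
`n`-simplices are the `(n+1)`-tuples of points of length at most `ε`. -/
def N (ε : ℝ) : SSet where
  obj Δ := { f : Fin (Δ.unop.len + 1) → X // len X f ≤ ε }
  map θ := TypeCat.ofHom fun f => ⟨f.1 ∘ θ.unop.toOrderHom, (len_comp_le X f.1 θ.unop.toOrderHom).trans f.2⟩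
  map_id _ := rfl
  map_comp _ _ := rfl

/-- The Vietoris–Rips simplicial set of a metric space at scale `ε`: the simplicial set whose
`n`-simplices are the `(n+1)`-tuples of points with pairwise distances at most `ε`. -/
def V (ε : ℝ) : SSet where
  obj Δ := { f : Fin (Δ.unop.len + 1) → X // ∀ i j, dist (f i) (f j) ≤ ε }
  map θ := TypeCat.ofHom fun f => ⟨f.1 ∘ θ.unop.toOrderHom, fun _ _ => f.2 _ _⟩
  map_id _ := rfl
  map_comp _ _ := rfl

/-- The "strict" enriched nerve: tuples of length strictly less than `ε`. -/
def N' (ε : ℝ) : SSet where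
  obj Δ := { f : Fin (Δ.unop.len + 1) → X // len X f < ε }
  map θ := TypeCat.ofHom fun f => ⟨f.1 ∘ θ.unop.toOrderHom, lt_of_le_of_lt (len_comp_le X f.1 θ.unop.toOrderHom) f.2⟩
  map_id _ := rfl
  map_comp _ _ := rfl

/-- Inclusion of enriched nerves for `ε ≤ ε'`. -/
def Nincl {ε ε' : ℝ} (h : ε ≤ ε') : N X ε ⟶ N X ε' where
  app _ := TypeCat.ofHom fun f => ⟨f.1, f.2.trans h⟩
  naturality _ _ _ := rfl

/-- Inclusion of Vietoris–Rips simplicial sets for `ε ≤ ε'`. -/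
def Vincl {ε ε' : ℝ} (h : ε ≤ ε') : V X ε ⟶ V X ε' where
  app _ := TypeCat.ofHom fun f => ⟨f.1, fun i j => (f.2 i j).trans h⟩
  naturality _ _ _ := rfl

/-- Inclusion of the strict nerve into the nerve. -/
def N'incl (ε : ℝ) : N' X ε ⟶ N X ε where
  app _ := TypeCat.ofHom fun f => ⟨f.1, f.2.le⟩
  naturality _ _ _ := rfl

end Mag

/-- The unnormalised chain complex (alternating face map complex) of the free simplicial
abelian group on a simplicial set. -/
def Mag.CC : SSet ⥤ ChainComplex AddCommGrpCat ℕ :=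
  (SimplicialObject.whiskering _ _).obj AddCommGrpCat.free ⋙
    AlgebraicTopology.alternatingFaceMapComplex AddCommGrpCat

namespace Mag

variable (X : Type) [MetricSpace X]

/-- `CN X ε` is the unnormalised chain complex of the free simplicial abelian group on the
enriched nerve `N X ε`. -/
def CN (ε : ℝ) : ChainComplex AddCommGrpCat ℕ := CC.obj (N X ε)

/-- `CV X ε` is the unnormalised chain complex of the free simplicial abelian group on the
Vietoris–Rips simplicial set `V X ε`. -/
def CV (ε : ℝ) : ChainComplex AddCommGrpCat ℕ := CC.obj (V X ε)

def CNmap {ε ε' : ℝ} (h : ε ≤ ε') : CN X ε ⟶ CN X ε' := CC.map (Nincl X h)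

def CVmap {ε ε' : ℝ} (h : ε ≤ ε') : CV X ε ⟶ CV X ε' := CC.map (Vincl X h)

end Mag


namespace Mag

variable (X : Type) [MetricSpace X]

/-- The poset `(0,∞)` of positive real numbers, regarded as a category. -/
abbrev Pos : Type := {x : ℝ // 0 < x}

/-- The poset `[0,∞)` of non-negative real numbers, regarded as a category. -/
abbrev Nneg : Type := {x : ℝ // 0 ≤ x}

/-- The filtered enriched nerve, as a functor `(0,∞) ⥤ sSet`. -/
def Nfil : Pos ⥤ SSet where
  obj ε := N X ε.1
  map h := Nincl X (leOfHom h)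
  map_id _ := rfl
  map_comp _ _ := rfl

/-- The filtered Vietoris–Rips simplicial set, as a functor `(0,∞) ⥤ sSet`. -/
def Vfil : Pos ⥤ SSet where
  obj ε := V X ε.1
  map h := Vincl X (leOfHom h)
  map_id _ := rfl
  map_comp _ _ := rfl

/-- The `k`-th homology functor on chain complexes of abelian groups. -/
abbrev Hk (k : ℕ) : ChainComplex AddCommGrpCat ℕ ⥤ AddCommGrpCat :=
  HomologicalComplex.homologyFunctor AddCommGrpCat (ComplexShape.down ℕ) k

/-- The functor `ε ↦ H_k(CN(X)(ε))` on `(0,∞)`, with maps induced by inclusions. -/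
def NH (k : ℕ) : Pos ⥤ AddCommGrpCat := Nfil X ⋙ CC ⋙ Hk k

/-- The functor `ε ↦ H_k(CV(X)(ε))` on `(0,∞)`, with maps induced by inclusions. -/
def VH (k : ℕ) : Pos ⥤ AddCommGrpCat := Vfil X ⋙ CC ⋙ Hk k

end Mag

namespace Mag

variable (X : Type) [MetricSpace X]

/-- `D(ε)`: the subcomplex of `CN(X)(ε)` spanned by the tuples of length strictly less
than `ε`. -/
def Dcx (ε : ℝ) : ChainComplex AddCommGrpCat ℕ := CC.obj (N' X ε)

/-- The inclusion `D(ε) → CN(X)(ε)`. -/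
def Dincl (ε : ℝ) : Dcx X ε ⟶ CN X ε := CC.map (N'incl X ε)

/-- The quotient chain complex `CN(X)(ε)/D(ε)`, whose homology is the magnitude homology
of `X` in grading `ε`. -/
def quotCx (ε : ℝ) : ChainComplex AddCommGrpCat ℕ := Limits.cokernel (Dincl X ε)

/-- The functor `ε ↦ MH_k(ε) := H_k(CN(X)(ε)/D(ε))` (magnitude homology in grading `ε`),
regarded as a functor on the poset `(0,∞)` in which every map `MH_k(ε) → MH_k(ε')` with
`ε < ε'` is the zero homomorphism. -/
def MHfil (k : ℕ) : Pos ⥤ AddCommGrpCat where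
  obj a := (Hk k).obj (quotCx X a.1)
  map {a b} _ := if hab : a = b then eqToHom (by rw [hab]) else 0
  map_id a := by simp
  map_comp {a b c} h h' := by
    by_cases hab : a = b
    · subst hab
      by_cases hbc : a = c
      · subst hbc; simp
      · simp [hbc]
    · have hac : ¬ a = c := by
        intro e; subst e
        exact hab (le_antisymm (leOfHom h) (leOfHom h'))
      by_cases hbc : b = c
      · subst hbc; simp [hab, hac]
      · simp [hab, hbc, hac]

end Mag

section Limits

variable {C : Type*} [Category C]

theorem isZero_limit_of_forall_exists_map_eq_zero {J : Type*} [Category J] [HasZeroMorphisms C]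
    (F : J ⥤ C) [HasLimit F]
    (h : ∀ j, ∃ (i : J) (f : i ⟶ j), F.map f = 0) : IsZero (limit F) := by
  rw [IsZero.iff_id_eq_zero]
  refine limit.hom_ext fun j => ?_
  obtain ⟨i, f, hf⟩ := h j
  rw [Category.id_comp, zero_comp, ← limit.w F f, hf, comp_zero]

theorem isIso_limMap_of_interleaved {J : Type*} [Preorder J] {F G : J ⥤ C} [HasLimit F]
    [HasLimit G] (α : F ⟶ G) (r : J →o J) (hr : ∀ j, r j ≤ j) (β : ∀ j, G.obj (r j) ⟶ F.obj j)
    (hβ : ∀ {i j} (h : i ≤ j), β i ≫ F.map (homOfLE h) = G.map (homOfLE (r.monotone h)) ≫ β j)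
    (hαβ : ∀ j, α.app (r j) ≫ β j = F.map (homOfLE (hr j)))
    (hβα : ∀ j, β j ≫ α.app j = G.map (homOfLE (hr j))) :
    IsIso (limMap α) := by
  let c : Cone F :=
    { pt := limit G
      π :=
        { app j := limit.π G (r j) ≫ β j
          naturality i j h := by
            simp only [Functor.const_obj_obj, Functor.const_obj_map, Category.id_comp,
              Category.assoc]
            rw [show h = homOfLE (leOfHom h) from rfl, hβ, ← Category.assoc, limit.w] } }
  refine ⟨limit.lift F c, ?_, ?_⟩ <;> ext j <;> simp [c, hαβ, hβα]

end Limits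

namespace Mag

open Opposite Simplicial

theorem isIso_homology_map_of_bijective {S T : SSet} (f : S ⟶ T) (k : ℕ)
    (hf : ∀ n ≤ k + 1, Function.Bijective (f.app (op ⦋n⦌))) :
    IsIso ((CC ⋙ Hk k).map f) := by
  have hdeg : ∀ n ≤ k + 1, IsIso ((CC.map f).f n) := fun n hn =>
    have : IsIso (f.app (op ⦋n⦌)) := (isIso_iff_bijective _).2 (hf n hn)
    Functor.map_isIso AddCommGrpCat.free (f.app (op ⦋n⦌))
  have hnext : (ComplexShape.down ℕ).next k ≤ k + 1 := by
    cases k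
    · simp
    · rw [ChainComplex.next_nat_succ]; omega
  let φ := (HomologicalComplex.shortComplexFunctor _ _ k).map (CC.map f)
  have : IsIso φ.τ₁ := hdeg _ (ChainComplex.prev ℕ k).le
  have : IsIso φ.τ₂ := hdeg k k.le_succ
  have : IsIso φ.τ₃ := hdeg _ hnext
  have : IsIso φ := ShortComplex.isIso_of_isIso φ
  exact ShortComplex.isIso_homologyMap_of_isIso _

variable (X : Type) [MetricSpace X]

lemma dist_le_len {n : ℕ} (f : Fin (n + 1) → X) (i j : Fin (n + 1)) :
    dist (f i) (f j) ≤ len X f := by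
  wlog hij : i ≤ j generalizing i j
  · rw [dist_comm]
    exact this j i (le_of_not_ge hij)
  let g : Fin 2 →o Fin (n + 1) :=
    ⟨![i, j], fun a b hab => by fin_cases a <;> fin_cases b <;> simp_all⟩
  exact (len_comp_le X f g).trans_eq' (by simp [len]; rfl)

lemma len_le_mul_of_forall_dist_le {n : ℕ} (f : Fin (n + 1) → X) {ε : ℝ}
    (h : ∀ i j, dist (f i) (f j) ≤ ε) : len X f ≤ n * ε := by
  calc len X f ≤ ∑ _i : Fin n, ε := Finset.sum_le_sum fun i _ => h _ _
    _ = n * ε := by simp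

/-- The intersection `V(X)(ε) ∩ N(X)(ε')`. -/
def VN (ε ε' : ℝ) : SSet where
  obj Δ := { f : Fin (Δ.unop.len + 1) → X // (∀ i j, dist (f i) (f j) ≤ ε) ∧ len X f ≤ ε' }
  map θ := TypeCat.ofHom fun f => ⟨f.1 ∘ θ.unop.toOrderHom,
    fun _ _ => f.2.1 _ _, (len_comp_le X f.1 θ.unop.toOrderHom).trans f.2.2⟩
  map_id _ := rfl
  map_comp _ _ := rfl

def NtoV (ε : ℝ) : N X ε ⟶ V X ε where
  app _ := TypeCat.ofHom fun f => ⟨f.1, fun i j => (dist_le_len X f.1 i j).trans f.2⟩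
  naturality _ _ _ := rfl

def NtoVN {ε ε' : ℝ} (h : ε ≤ ε') : N X ε ⟶ VN X ε ε' where
  app _ := TypeCat.ofHom fun f => ⟨f.1, fun i j => (dist_le_len X f.1 i j).trans f.2, f.2.trans h⟩
  naturality _ _ _ := rfl

def VNtoV (ε ε' : ℝ) : VN X ε ε' ⟶ V X ε where
  app _ := TypeCat.ofHom fun f => ⟨f.1, f.2.1⟩
  naturality _ _ _ := rfl

def VNtoN (ε ε' : ℝ) : VN X ε ε' ⟶ N X ε' where
  app _ := TypeCat.ofHom fun f => ⟨f.1, f.2.2⟩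
  naturality _ _ _ := rfl

def VNincl {ε ε' η η' : ℝ} (h : ε ≤ η) (h' : ε' ≤ η') : VN X ε ε' ⟶ VN X η η' where
  app _ := TypeCat.ofHom fun f => ⟨f.1, fun i j => (f.2.1 i j).trans h, f.2.2.trans h'⟩
  naturality _ _ _ := rfl

lemma bijective_VNtoV_app {ε ε' : ℝ} {n : ℕ} (h : n * ε ≤ ε') :
    Function.Bijective ((VNtoV X ε ε').app (op ⦋n⦌)) :=
  ⟨fun _ _ hxy => Subtype.ext (congrArg Subtype.val hxy :),
    fun x => ⟨⟨x.1, x.2, (len_le_mul_of_forall_dist_le X x.1 x.2).trans h⟩, rfl⟩⟩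

def NtoVfil : Nfil X ⟶ Vfil X where
  app ε := NtoV X ε.1
  naturality _ _ _ := rfl

def NHtoVH (k : ℕ) : NH X k ⟶ VH X k := Functor.whiskerRight (NtoVfil X) (CC ⋙ Hk k)

def shrink (k : ℕ) : Pos →o Pos where
  toFun δ := ⟨δ.1 / (k + 1), div_pos δ.2 (by positivity)⟩
  monotone' a b h := div_le_div_of_nonneg_right (show a.1 ≤ b.1 from h) (by positivity)

lemma shrink_le (k : ℕ) (δ : Pos) : shrink k δ ≤ δ :=
  div_le_self δ.2.le (by linarith [(k.cast_nonneg : (0 : ℝ) ≤ k)])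

instance (k : ℕ) (δ : Pos) : IsIso ((CC ⋙ Hk k).map (VNtoV X (shrink k δ).1 δ.1)) :=
  isIso_homology_map_of_bijective _ k fun n hn => bijective_VNtoV_app X <|
    calc (n : ℝ) * (δ.1 / (k + 1)) ≤ (k + 1) * (δ.1 / (k + 1)) :=
          mul_le_mul_of_nonneg_right (by exact_mod_cast hn) (div_pos δ.2 (by positivity)).le
      _ = δ.1 := mul_div_cancel₀ _ (by positivity)

def VHtoNH (k : ℕ) (δ : Pos) : (VH X k).obj (shrink k δ) ⟶ (NH X k).obj δ :=
  (asIso ((CC ⋙ Hk k).map (VNtoV X (shrink k δ).1 δ.1))).inv ≫ (CC ⋙ Hk k).map (VNtoN X _ _)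

lemma VHtoNH_naturality (k : ℕ) {δ δ' : Pos} (h : δ ≤ δ') :
    VHtoNH X k δ ≫ (NH X k).map (homOfLE h) =
      (VH X k).map (homOfLE ((shrink k).monotone h)) ≫ VHtoNH X k δ' := by
  dsimp only [VHtoNH, VH, NH, Functor.comp_obj, Functor.comp_map, Vfil, Nfil, NHtoVH,
    Functor.whiskerRight_app, NtoVfil]
  simp only [asIso_inv, Category.assoc, IsIso.inv_comp_eq]
  have hVN : (Hk k).map (CC.map (VNtoV X _ δ.1)) ≫
        (Hk k).map (CC.map (Vincl X ((shrink k).monotone h))) =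
      (Hk k).map (CC.map (VNincl X ((shrink k).monotone h) h)) ≫
        (Hk k).map (CC.map (VNtoV X _ δ'.1)) := by
    simp only [← Functor.map_comp]
    rfl
  rw [reassoc_of% hVN, IsIso.hom_inv_id_assoc]
  simp only [← Functor.map_comp]
  rfl

lemma NHtoVH_app_comp_VHtoNH (k : ℕ) (δ : Pos) :
    (NHtoVH X k).app (shrink k δ) ≫ VHtoNH X k δ = (NH X k).map (homOfLE (shrink_le k δ)) := by
  dsimp only [VHtoNH, VH, NH, Functor.comp_obj, Functor.comp_map, Vfil, Nfil, NHtoVH,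
    Functor.whiskerRight_app, NtoVfil]
  rw [show NtoV X _ = NtoVN X (shrink_le k δ) ≫ VNtoV X _ δ.1 from rfl, Functor.map_comp,
    Functor.map_comp, asIso_inv, Category.assoc, IsIso.hom_inv_id_assoc, ← Functor.map_comp,
    ← Functor.map_comp]
  rfl

lemma VHtoNH_comp_NHtoVH_app (k : ℕ) (δ : Pos) :
    VHtoNH X k δ ≫ (NHtoVH X k).app δ = (VH X k).map (homOfLE (shrink_le k δ)) := by
  dsimp only [VHtoNH, VH, NH, Functor.comp_obj, Functor.comp_map, Vfil, Nfil, NHtoVH,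
    Functor.whiskerRight_app, NtoVfil]
  rw [asIso_inv, Category.assoc, IsIso.inv_comp_eq]
  simp only [← Functor.map_comp]
  rfl

instance isIso_limMap_NHtoVH (k : ℕ) : IsIso (limMap (NHtoVH X k)) :=
  isIso_limMap_of_interleaved _ (shrink k) (shrink_le k) (VHtoNH X k) (VHtoNH_naturality X k)
    (NHtoVH_app_comp_VHtoNH X k) (VHtoNH_comp_NHtoVH_app X k)

lemma isZero_limit_MHfil (k : ℕ) : IsZero (limit (MHfil X k)) :=
  isZero_limit_of_forall_exists_map_eq_zero _ fun δ =>
    ⟨⟨δ.1 / 2, half_pos δ.2⟩, homOfLE (half_le_self δ.2.le),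
      dif_neg fun h => (half_lt_self δ.2).ne (congrArg Subtype.val h)⟩

end Mag

/-- **Statement 4.** If the `k`-th Vietoris homology of `X` is nonzero, then the limit as
`ε → 0` of magnitude homology `MH_k(ε)` is not isomorphic to the limit as `ε → 0` of
blurred magnitude homology `H_k(CN(X)(ε))`: the former is zero, while the latter is
isomorphic to the `k`-th Vietoris homology. -/
theorem limit_MH_ne_limit_blurred (X : Type) [MetricSpace X] (k : ℕ)
    (hV : ¬ Limits.IsZero (Limits.limit (Mag.VH X k))) :
    ¬ Nonempty (Limits.limit (Mag.MHfil X k) ≅ Limits.limit (Mag.NH X k)) ∧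
    Limits.IsZero (Limits.limit (Mag.MHfil X k)) ∧
    Nonempty (Limits.limit (Mag.NH X k) ≅ Limits.limit (Mag.VH X k)) := by
  have hMH := Mag.isZero_limit_MHfil X k
  let e : limit (Mag.NH X k) ≅ limit (Mag.VH X k) := asIso (limMap (Mag.NHtoVH X k))
  exact ⟨fun ⟨e'⟩ => hV ((hMH.of_iso e'.symm).of_iso e.symm), hMH, ⟨e⟩⟩
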